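/- Let w be a word over {1,…,n} and S, T ⊆ {1,…,n} with |S| = |T|, S < T, and |w|_T ≤ |w|_S. Then there exists N ∈ [S,T] with N ≠ T such that [N,T] has chain length at most n and |w|_M ≤ |w|_N for all M ∈ [N,T]. -/

import Mathlib

/-- The i-th smallest element (0-indexed) of a finite set of naturals. -/
def nth (S : Finset ℕ) (i : ℕ) : ℕ := (S.sort (· ≤ ·)).getD i 0

/-- The order on 2^[n]: S ≤ T iff |S| ≥ |T| and S^i ≤ T^i for i ≤ |T|. -/
def gale (S T : Finset ℕ) : Prop :=
  T.card ≤ S.card ∧ ∀ i < T.card, nth S i ≤ nth T i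

/-- |w|_N : number of occurrences in w of letters from N. -/
def wcount (w : List ℕ) (N : Finset ℕ) : ℕ := (w.filter (· ∈ N)).length

/-- A strictly increasing chain from S to T inside the order interval [S,T]. -/
def isChain (S T : Finset ℕ) (P : List (Finset ℕ)) : Prop :=
  P.head? = some S ∧ P.getLast? = some T ∧
  P.Chain' (fun A B => gale A B ∧ A ≠ B) ∧
  ∀ Q ∈ P, gale S Q ∧ gale Q T

/-- The join S ∨ T in 2^[n]. -/
def galeJoin (S T : Finset ℕ) : Finset ℕ :=
  (Finset.range (min S.card T.card)).image fun i => max (nth S i) (nth T i)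

/-- The meet S ∧ T in 2^[n]. -/
def galeMeet (S T : Finset ℕ) : Finset ℕ :=
  ((Finset.range (min S.card T.card)).image fun i => min (nth S i) (nth T i)) ∪
    (if T.card ≤ S.card then (Finset.Ico T.card S.card).image (nth S)
     else (Finset.Ico S.card T.card).image (nth T))

/-!
Among the sets `M ∈ [S, T]` with `M ≠ T` and `|w|_T ≤ |w|_M`, pick `N` with the largest element
sum `∑ M`. By maximality every `M` strictly between `N` and `T` has `|w|_M < |w|_T ≤ |w|_N`, which
is the domination claim. It also forces `t_i ≤ n_{i+1}` for all `i`: otherwise the sets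
`(n_0, max n_1 t_0, …, max n_{k-1} t_{k-2})` and `(min t_0 n_1, …, min t_{k-2} n_{k-1}, t_{k-1})`
lie strictly between `N` and `T` and together carry exactly the letters of `N` and `T`, so their
counts cannot both stay below `|w|_T`. Telescoping gives `∑ T - ∑ N ≤ t_{k-1} - n_0 ≤ n - 1`, and
as the element sum strictly increases along a chain, a chain from `N` to `T` has at most `n` sets.
-/

open Finset

lemma nth_eq_orderEmbOfFin (S : Finset ℕ) {k : ℕ} (h : S.card = k) (i : Fin k) :
    nth S i = S.orderEmbOfFin h i := by
  rw [orderEmbOfFin_apply, nth, List.getD_eq_getElem _ _ (by simp [h])]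
  rfl

lemma nth_mem (S : Finset ℕ) {i : ℕ} (hi : i < S.card) : nth S i ∈ S := by
  rw [nth_eq_orderEmbOfFin S rfl ⟨i, hi⟩]
  exact S.orderEmbOfFin_mem rfl _

lemma nth_lt_nth (S : Finset ℕ) {i j : ℕ} (hij : i < j) (hj : j < S.card) :
    nth S i < nth S j := by
  rw [nth_eq_orderEmbOfFin S rfl ⟨i, hij.trans hj⟩, nth_eq_orderEmbOfFin S rfl ⟨j, hj⟩]
  exact (S.orderEmbOfFin rfl).strictMono hij

lemma sum_eq_sum_range_nth {M : Type*} [AddCommMonoid M] (S : Finset ℕ) (g : ℕ → M) :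
    ∑ x ∈ S, g x = ∑ i ∈ range S.card, g (nth S i) := by
  conv_lhs => rw [← S.image_orderEmbOfFin_univ rfl]
  rw [sum_image fun _ _ _ _ h => (S.orderEmbOfFin rfl).injective h,
    ← Fin.sum_univ_eq_sum_range]
  simp only [nth_eq_orderEmbOfFin S rfl]

lemma eq_of_nth_eq {S T : Finset ℕ} (hc : S.card = T.card)
    (h : ∀ i < T.card, nth S i = nth T i) : S = T := by
  have hfun : ⇑(S.orderEmbOfFin hc) = T.orderEmbOfFin rfl := by
    ext i
    rw [← nth_eq_orderEmbOfFin, ← nth_eq_orderEmbOfFin, h i i.2]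
  rw [← S.image_orderEmbOfFin_univ hc, hfun, T.image_orderEmbOfFin_univ]

lemma card_image_range_of_strictMonoOn {k : ℕ} {f : ℕ → ℕ} (hf : StrictMonoOn f (Set.Iio k)) :
    ((range k).image f).card = k := by
  rw [card_image_of_injOn, card_range]
  exact hf.injOn.mono (by intro x; simp)

lemma nth_image_range_of_strictMonoOn {k : ℕ} {f : ℕ → ℕ} (hf : StrictMonoOn f (Set.Iio k))
    {i : ℕ} (hi : i < k) : nth ((range k).image f) i = f i := by
  have hcard := card_image_range_of_strictMonoOn hf
  have hmono : StrictMono fun j : Fin k => f j := fun a b hab => hf a.2 b.2 hab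
  have := orderEmbOfFin_unique hcard (f := fun j : Fin k => f j)
    (fun j => mem_image_of_mem f (mem_range.2 j.2)) hmono
  rw [nth_eq_orderEmbOfFin _ hcard ⟨i, hi⟩, ← this]

lemma wcount_eq_sum_count (w : List ℕ) (N : Finset ℕ) : wcount w N = ∑ x ∈ N, w.count x := by
  have key := Multiset.sum_count_eq_card (s := N) (m := (w.filter (· ∈ N) : Multiset ℕ))
    (by simp)
  rw [wcount, ← Multiset.coe_card, ← key]
  refine sum_congr rfl fun x hx => ?_
  simp [List.count_filter, hx]

lemma wcount_eq_sum_range (w : List ℕ) (N : Finset ℕ) :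
    wcount w N = ∑ i ∈ range N.card, w.count (nth N i) := by
  rw [wcount_eq_sum_count, sum_eq_sum_range_nth]

lemma gale_refl (S : Finset ℕ) : gale S S := ⟨le_rfl, fun _ _ => le_rfl⟩

lemma gale_trans {A B C : Finset ℕ} (hAB : gale A B) (hBC : gale B C) : gale A C :=
  ⟨hBC.1.trans hAB.1, fun i hi => (hAB.2 i (hi.trans_le hBC.1)).trans (hBC.2 i hi)⟩

lemma card_eq_of_gale_of_gale {S M T : Finset ℕ} (hSM : gale S M) (hMT : gale M T)
    (hcard : S.card = T.card) : M.card = T.card :=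
  le_antisymm (hSM.1.trans_eq hcard) hMT.1

lemma sum_le_sum_of_gale {S T : Finset ℕ} (hcard : S.card = T.card) (hST : gale S T) :
    ∑ x ∈ S, x ≤ ∑ x ∈ T, x := by
  rw [sum_eq_sum_range_nth S fun x => x, sum_eq_sum_range_nth T fun x => x, hcard]
  exact sum_le_sum fun i hi => hST.2 i (mem_range.1 hi)

lemma sum_lt_sum_of_gale {S T : Finset ℕ} (hcard : S.card = T.card) (hST : gale S T)
    (hne : S ≠ T) : ∑ x ∈ S, x < ∑ x ∈ T, x := by
  obtain ⟨i, hi, hlt⟩ : ∃ i < T.card, nth S i < nth T i := by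
    by_contra! h
    exact hne (eq_of_nth_eq hcard fun i hi => le_antisymm (hST.2 i hi) (h i hi))
  rw [sum_eq_sum_range_nth S fun x => x, sum_eq_sum_range_nth T fun x => x, hcard]
  exact sum_lt_sum (fun j hj => hST.2 j (mem_range.1 hj)) ⟨i, mem_range.2 hi, hlt⟩

lemma length_le_of_isChain {N T : Finset ℕ} {P : List (Finset ℕ)} (hcard : N.card = T.card)
    (hP : isChain N T P) : P.length ≤ ∑ x ∈ T, x + 1 - ∑ x ∈ N, x := by
  obtain ⟨-, -, hchain, hmem⟩ := hP
  have hcardQ : ∀ Q ∈ P, Q.card = T.card := fun Q hQ =>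
    card_eq_of_gale_of_gale (hmem Q hQ).1 (hmem Q hQ).2 hcard
  set L := P.map fun Q => ∑ x ∈ Q, x
  have hL : L.Pairwise (· < ·) := by
    refine List.IsChain.pairwise ((List.isChain_map _).2 ?_)
    refine List.IsChain.imp_of_mem_imp (fun A B hA hB hAB => ?_) hchain
    exact sum_lt_sum_of_gale ((hcardQ A hA).trans (hcardQ B hB).symm) hAB.1 hAB.2
  have hsub : L.toFinset ⊆ Icc (∑ x ∈ N, x) (∑ x ∈ T, x) := by
    intro r hr
    obtain ⟨Q, hQ, rfl⟩ := List.mem_map.1 (List.mem_toFinset.1 hr)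
    exact mem_Icc.2 ⟨sum_le_sum_of_gale (hcard.trans (hcardQ Q hQ).symm) (hmem Q hQ).1,
      sum_le_sum_of_gale (hcardQ Q hQ) (hmem Q hQ).2⟩
  calc P.length = L.toFinset.card := by
        rw [List.toFinset_card_of_nodup (hL.imp ne_of_lt), List.length_map]
    _ ≤ (Icc (∑ x ∈ N, x) (∑ x ∈ T, x)).card := card_le_card hsub
    _ = ∑ x ∈ T, x + 1 - ∑ x ∈ N, x := Nat.card_Icc _ _

def shiftJoin (S T : Finset ℕ) : Finset ℕ :=
  (range T.card).image fun p => if p = 0 then nth S 0 else max (nth S p) (nth T (p - 1))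

def shiftMeet (S T : Finset ℕ) : Finset ℕ :=
  (range T.card).image fun p => if p + 1 = T.card then nth T p else min (nth T p) (nth S (p + 1))

section Exchange

variable {S T : Finset ℕ}

lemma strictMonoOn_shiftJoin (hcard : S.card = T.card) :
    StrictMonoOn (fun p => if p = 0 then nth S 0 else max (nth S p) (nth T (p - 1)))
      (Set.Iio T.card) := by
  intro p hp q hq hpq
  simp only [Set.mem_Iio] at hp hq
  rcases Nat.eq_zero_or_pos p with rfl | hp0
  · simp only [if_pos, if_neg hpq.ne']
    exact (nth_lt_nth S hpq (hcard ▸ hq)).trans_le (le_max_left _ _)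
  · simp only [if_neg hp0.ne', if_neg (hp0.trans hpq).ne']
    exact max_lt_max (nth_lt_nth S hpq (hcard ▸ hq)) (nth_lt_nth T (by omega) (by omega))

lemma strictMonoOn_shiftMeet (hcard : S.card = T.card) :
    StrictMonoOn (fun p => if p + 1 = T.card then nth T p else min (nth T p) (nth S (p + 1)))
      (Set.Iio T.card) := by
  intro p hp q hq hpq
  simp only [Set.mem_Iio] at hp hq
  simp only [if_neg (show p + 1 ≠ T.card by omega)]
  split_ifs
  · exact (min_le_left _ _).trans_lt (nth_lt_nth T hpq hq)
  · exact min_lt_min (nth_lt_nth T hpq hq) (nth_lt_nth S (by omega) (by omega))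

lemma card_shiftJoin (hcard : S.card = T.card) : (shiftJoin S T).card = T.card :=
  card_image_range_of_strictMonoOn (strictMonoOn_shiftJoin hcard)

lemma card_shiftMeet (hcard : S.card = T.card) : (shiftMeet S T).card = T.card :=
  card_image_range_of_strictMonoOn (strictMonoOn_shiftMeet hcard)

lemma nth_shiftJoin (hcard : S.card = T.card) {p : ℕ} (hp : p < T.card) :
    nth (shiftJoin S T) p = if p = 0 then nth S 0 else max (nth S p) (nth T (p - 1)) :=
  nth_image_range_of_strictMonoOn (strictMonoOn_shiftJoin hcard) hp

lemma nth_shiftMeet (hcard : S.card = T.card) {p : ℕ} (hp : p < T.card) :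
    nth (shiftMeet S T) p =
      if p + 1 = T.card then nth T p else min (nth T p) (nth S (p + 1)) :=
  nth_image_range_of_strictMonoOn (strictMonoOn_shiftMeet hcard) hp

lemma gale_shiftJoin (hcard : S.card = T.card) : gale S (shiftJoin S T) := by
  refine ⟨(card_shiftJoin hcard).trans_le hcard.ge, fun p hp => ?_⟩
  rw [card_shiftJoin hcard] at hp
  rw [nth_shiftJoin hcard hp]
  split_ifs with h0
  · rw [h0]
  · exact le_max_left _ _

lemma shiftJoin_gale (hcard : S.card = T.card) (hST : gale S T) : gale (shiftJoin S T) T := by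
  refine ⟨(card_shiftJoin hcard).ge, fun p hp => ?_⟩
  rw [nth_shiftJoin hcard hp]
  split_ifs with h0
  · exact h0 ▸ hST.2 p hp
  · exact max_le (hST.2 p hp) (nth_lt_nth T (by omega) hp).le

lemma gale_shiftMeet (hcard : S.card = T.card) (hST : gale S T) : gale S (shiftMeet S T) := by
  refine ⟨(card_shiftMeet hcard).trans_le hcard.ge, fun p hp => ?_⟩
  rw [card_shiftMeet hcard] at hp
  rw [nth_shiftMeet hcard hp]
  split_ifs with hlast
  · exact hST.2 p hp
  · exact le_min (hST.2 p hp) (nth_lt_nth S (by omega) (by omega)).le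

lemma shiftMeet_gale (hcard : S.card = T.card) : gale (shiftMeet S T) T := by
  refine ⟨(card_shiftMeet hcard).ge, fun p hp => ?_⟩
  rw [nth_shiftMeet hcard hp]
  split_ifs
  · rfl
  · exact min_le_left _ _

lemma wcount_shiftJoin_add_wcount_shiftMeet (hcard : S.card = T.card) (w : List ℕ) :
    wcount w (shiftJoin S T) + wcount w (shiftMeet S T) = wcount w S + wcount w T := by
  simp only [wcount_eq_sum_range, card_shiftJoin hcard, card_shiftMeet hcard, hcard]
  obtain hk | ⟨m, hm⟩ : T.card = 0 ∨ ∃ m, T.card = m + 1 := by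
    rcases T.card with _ | m <;> simp
  · simp [hk]
  have hpair : ∀ p < m, w.count (nth (shiftJoin S T) (p + 1)) + w.count (nth (shiftMeet S T) p)
      = w.count (nth S (p + 1)) + w.count (nth T p) := by
    intro p hp
    rw [nth_shiftJoin hcard (by omega), nth_shiftMeet hcard (by omega), if_neg (by omega),
      if_neg (by omega), Nat.add_sub_cancel]
    rcases le_total (nth S (p + 1)) (nth T p) with h | h
    · rw [max_eq_right h, min_eq_right h, add_comm]
    · rw [max_eq_left h, min_eq_left h]
  rw [hm, sum_range_succ', sum_range_succ, sum_range_succ' (fun p => w.count (nth S p)),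
    sum_range_succ (fun p => w.count (nth T p)), nth_shiftJoin hcard (by omega),
    nth_shiftMeet hcard (by omega), if_pos rfl, if_pos hm.symm]
  have := sum_congr rfl fun p hp => hpair p (mem_range.1 hp)
  rw [sum_add_distrib, sum_add_distrib] at this
  omega

lemma shiftJoin_ne_of_lt (hcard : S.card = T.card) {i : ℕ} (hi : i + 1 < T.card)
    (hlt : nth S (i + 1) < nth T i) : shiftJoin S T ≠ S ∧ shiftJoin S T ≠ T := by
  have hA : nth (shiftJoin S T) (i + 1) = nth T i := by
    rw [nth_shiftJoin hcard hi, if_neg (by omega), Nat.add_sub_cancel, max_eq_right hlt.le]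
  refine ⟨fun h => ?_, fun h => ?_⟩
  · rw [h] at hA
    exact hlt.ne hA
  · rw [h] at hA
    exact (nth_lt_nth T (Nat.lt_succ_self i) hi).ne' hA

lemma shiftMeet_ne_of_lt (hcard : S.card = T.card) {i : ℕ} (hi : i + 1 < T.card)
    (hlt : nth S (i + 1) < nth T i) : shiftMeet S T ≠ S ∧ shiftMeet S T ≠ T := by
  have hB : nth (shiftMeet S T) i = nth S (i + 1) := by
    rw [nth_shiftMeet hcard (by omega), if_neg (by omega), min_eq_right hlt.le]
  refine ⟨fun h => ?_, fun h => ?_⟩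
  · rw [h] at hB
    exact (nth_lt_nth S (Nat.lt_succ_self i) (hcard ▸ hi)).ne hB
  · rw [h] at hB
    exact hlt.ne' hB

end Exchange

lemma nth_le_nth_succ_of_wcount_lt {S T : Finset ℕ} {w : List ℕ} (hcard : S.card = T.card)
    (hST : gale S T) (hw : wcount w T ≤ wcount w S)
    (hmax : ∀ M, gale S M → gale M T → M ≠ S → M ≠ T → wcount w M < wcount w T)
    {i : ℕ} (hi : i + 1 < T.card) : nth T i ≤ nth S (i + 1) := by
  by_contra! hlt
  obtain ⟨hAS, hAT⟩ := shiftJoin_ne_of_lt hcard hi hlt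
  obtain ⟨hBS, hBT⟩ := shiftMeet_ne_of_lt hcard hi hlt
  have hA := hmax _ (gale_shiftJoin hcard) (shiftJoin_gale hcard hST) hAS hAT
  have hB := hmax _ (gale_shiftMeet hcard hST) (shiftMeet_gale hcard) hBS hBT
  have := wcount_shiftJoin_add_wcount_shiftMeet hcard w
  omega

lemma sum_add_nth_zero_le_of_nth_le_nth_succ {S T : Finset ℕ} (hcard : S.card = T.card)
    (hpos : 0 < T.card) (h : ∀ i, i + 1 < T.card → nth T i ≤ nth S (i + 1)) :
    ∑ x ∈ T, x + nth S 0 ≤ ∑ x ∈ S, x + nth T (T.card - 1) := by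
  obtain ⟨m, hm⟩ : ∃ m, T.card = m + 1 := ⟨T.card - 1, by omega⟩
  rw [sum_eq_sum_range_nth S fun x => x, sum_eq_sum_range_nth T fun x => x, hcard, hm,
    sum_range_succ, sum_range_succ', Nat.add_sub_cancel]
  have : ∑ i ∈ range m, nth T i ≤ ∑ i ∈ range m, nth S (i + 1) :=
    sum_le_sum fun i hi => h i (by rw [hm]; have := mem_range.1 hi; omega)
  omega

lemma exists_gale_forall_between_wcount_lt {S T : Finset ℕ} {w : List ℕ}
    (hcard : S.card = T.card) (hST : gale S T) (hne : S ≠ T) (hw : wcount w T ≤ wcount w S) :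
    ∃ N, gale S N ∧ gale N T ∧ N ≠ T ∧ wcount w T ≤ wcount w N ∧
      ∀ M, gale N M → gale M T → M ≠ N → M ≠ T → wcount w M < wcount w T := by
  obtain ⟨N, ⟨hSN, hNT, hNT', hwN⟩, hNmin⟩ :=
    (measure fun M : Finset ℕ => ∑ x ∈ T, x - ∑ x ∈ M, x).wf.has_min
      {M | gale S M ∧ gale M T ∧ M ≠ T ∧ wcount w T ≤ wcount w M} ⟨S, gale_refl S, hST, hne, hw⟩
  have hcN := card_eq_of_gale_of_gale hSN hNT hcard
  refine ⟨N, hSN, hNT, hNT', hwN, fun M hNM hMT hMN hMT' => ?_⟩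
  by_contra! hwM
  refine hNmin M ⟨gale_trans hSN hNM, hMT, hMT', hwM⟩ ?_
  have hcM := card_eq_of_gale_of_gale hNM hMT hcN
  have := sum_lt_sum_of_gale (hcN.trans hcM.symm) hNM hMN.symm
  have := sum_le_sum_of_gale hcM hMT
  change ∑ x ∈ T, x - ∑ x ∈ M, x < ∑ x ∈ T, x - ∑ x ∈ N, x
  omega

theorem stmt_13_general (n : ℕ) (w : List ℕ)
    (S T : Finset ℕ) (hS : S ⊆ Finset.Icc 1 n) (hT : T ⊆ Finset.Icc 1 n)
    (hcard : S.card = T.card) (hST : gale S T) (hne : S ≠ T)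
    (hw' : wcount w T ≤ wcount w S) :
    ∃ N : Finset ℕ, gale S N ∧ gale N T ∧ N ≠ T ∧
      (∀ P : List (Finset ℕ), isChain N T P → P.length ≤ n) ∧
      ∀ M : Finset ℕ, gale N M → gale M T → wcount w M ≤ wcount w N := by
  obtain ⟨N, hSN, hNT, hNT', hwN, hmax⟩ := exists_gale_forall_between_wcount_lt hcard hST hne hw'
  have hcN := card_eq_of_gale_of_gale hSN hNT hcard
  refine ⟨N, hSN, hNT, hNT', fun P hP => ?_, fun M hNM hMT => ?_⟩
  · have hpos : 0 < T.card := Nat.pos_of_ne_zero fun h0 =>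
      hNT' ((card_eq_zero.1 (hcN.trans h0)).trans (card_eq_zero.1 h0).symm)
    have hN0 : 1 ≤ nth N 0 :=
      (mem_Icc.1 (hS (nth_mem S (hcard ▸ hpos)))).1.trans (hSN.2 0 (hcN ▸ hpos))
    have hTn : nth T (T.card - 1) ≤ n := (mem_Icc.1 (hT (nth_mem T (by omega)))).2
    have := sum_add_nth_zero_le_of_nth_le_nth_succ hcN hpos
      fun i hi => nth_le_nth_succ_of_wcount_lt hcN hNT hwN hmax hi
    have := length_le_of_isChain hcN hP
    omega
  · by_cases hMN : M = N
    · rw [hMN]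
    by_cases hMT' : M = T
    · rwa [hMT']
    exact (hmax M hNM hMT hMN hMT').le.trans hwN

theorem stmt_13 (n : ℕ) (w : List ℕ) (hw : ∀ x ∈ w, x ∈ Finset.Icc 1 n)
    (S T : Finset ℕ) (hS : S ⊆ Finset.Icc 1 n) (hT : T ⊆ Finset.Icc 1 n)
    (hcard : S.card = T.card) (hST : gale S T) (hne : S ≠ T)
    (hw' : wcount w T ≤ wcount w S) :
    ∃ N : Finset ℕ, gale S N ∧ gale N T ∧ N ≠ T ∧
      (∀ P : List (Finset ℕ), isChain N T P → P.length ≤ n) ∧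
      ∀ M : Finset ℕ, gale N M → gale M T → wcount w M ≤ wcount w N :=
  stmt_13_general n w S T hS hT hcard hST hne hw'
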